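/- arXiv:1507.02097 — 3 statements merged into one kernel-verified Lean document; each statement's English description precedes it below -/
import Mathlib

section
/- Let k > 0 and ε ∈ ℝ with 0 < |ε| ≤ k², let z ∈ ℂ satisfy z² = k² + iε and Im z > 0, and let η ∈ ℂ satisfy Re((conj z)·η) ≥ 0. Set Θ := −(conj z)/|z|. Then for all real a, b, c ≥ 0, writing A := a − z²·b − i·η·c, one has |A| ≥ Im(Θ·A) ≥ (|ε|/(2√2·k²))·(a + k²·b). -/
/-!
Write `z = x + iy` with `y > 0`. Then `x² - y² = k²` and `2xy = ε`, so `|z|² = k² + 2y² ≥ k²` and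
`ε² = 4y²(k² + y²)`. Expanding, `|z| · Im(ΘA) = y a + |z|² y b + c Re(z̄η) ≥ y (a + k² b)`,
so the lower bound reduces to `|ε| / (2√2 k²) ≤ y / |z|`. Squared, this is
`(k² + y²)(k² + 2y²) ≤ 2k⁴`, which follows from `ε² ≤ k⁴`, i.e. `4y²(k² + y²) ≤ k⁴`.
The upper bound holds because `|Θ| = 1`.
-/

open Complex ComplexConjugate

lemma im_neg_conj_div_norm_mul (z η : ℂ) (a b c : ℝ) :
    (-conj z / (‖z‖ : ℂ) * (a - z ^ 2 * b - I * η * c)).im =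
      (z.im * a + ‖z‖ ^ 2 * z.im * b + c * (conj z * η).re) / ‖z‖ := by
  rw [div_mul_eq_mul_div, div_ofReal_im, Complex.sq_norm, normSq_apply]
  congr 1
  simp only [mul_im, mul_re, sub_im, sub_re, neg_im, neg_re, conj_re, conj_im, ofReal_re,
    ofReal_im, I_re, I_im, sq]
  ring

lemma im_neg_conj_div_norm_mul_le_norm (z w : ℂ) : (-conj z / (‖z‖ : ℂ) * w).im ≤ ‖w‖ := by
  have hΘ : ‖-conj z / (‖z‖ : ℂ)‖ ≤ 1 := by
    rw [norm_div, norm_neg, norm_conj, norm_real, Real.norm_of_nonneg (norm_nonneg z)]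
    exact div_self_le_one _
  calc (-conj z / (‖z‖ : ℂ) * w).im ≤ ‖-conj z / (‖z‖ : ℂ) * w‖ := im_le_norm _
    _ ≤ ‖w‖ := by rw [norm_mul]; exact mul_le_of_le_one_left (norm_nonneg w) hΘ

section SquareRoot

variable {k ε : ℝ} {z : ℂ}

lemma re_sq_sub_im_sq_of_sq_eq (hz : z ^ 2 = k ^ 2 + I * ε) : z.re ^ 2 - z.im ^ 2 = k ^ 2 := by
  simpa [sq, mul_re] using congrArg re hz

lemma two_mul_re_mul_im_of_sq_eq (hz : z ^ 2 = k ^ 2 + I * ε) : 2 * (z.re * z.im) = ε := by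
  have := congrArg im hz
  simp only [sq, mul_im, add_im, ofReal_re, ofReal_im, I_re, I_im] at this
  linarith

lemma sq_norm_of_sq_eq (hz : z ^ 2 = k ^ 2 + I * ε) : ‖z‖ ^ 2 = k ^ 2 + 2 * z.im ^ 2 := by
  rw [Complex.sq_norm, normSq_apply]
  linear_combination re_sq_sub_im_sq_of_sq_eq hz

lemma sq_eq_four_mul_im_sq_of_sq_eq (hz : z ^ 2 = k ^ 2 + I * ε) : ε ^ 2 = 4 * z.im ^ 2 * (k ^ 2 + z.im ^ 2) := by
  rw [← two_mul_re_mul_im_of_sq_eq hz]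
  linear_combination 4 * z.im ^ 2 * re_sq_sub_im_sq_of_sq_eq hz

lemma abs_div_le_im_div_norm_of_sq_eq (hk : 0 < k) (hεk : |ε| ≤ k ^ 2)
    (hz : z ^ 2 = k ^ 2 + I * ε) (him : 0 < z.im) :
    |ε| / (2 * √2 * k ^ 2) ≤ z.im / ‖z‖ := by
  have hz0 : z ≠ 0 := by rintro rfl; simp at him
  rw [div_le_div_iff₀ (by positivity) (norm_pos_iff.mpr hz0)]
  have hε2 : 4 * z.im ^ 2 * (k ^ 2 + z.im ^ 2) ≤ k ^ 4 := by
    rw [← sq_eq_four_mul_im_sq_of_sq_eq hz, ← sq_abs]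
    nlinarith [abs_nonneg ε]
  rw [← sq_le_sq₀ (by positivity) (by positivity)]
  calc (|ε| * ‖z‖) ^ 2 = 4 * z.im ^ 2 * (k ^ 2 + z.im ^ 2) * (k ^ 2 + 2 * z.im ^ 2) := by
        rw [mul_pow, sq_abs, sq_eq_four_mul_im_sq_of_sq_eq hz, sq_norm_of_sq_eq hz]
    _ ≤ 8 * k ^ 4 * z.im ^ 2 := by nlinarith [sq_nonneg (z.im ^ 2), mul_pos hk him]
    _ = (z.im * (2 * √2 * k ^ 2)) ^ 2 := by
        rw [mul_pow, mul_pow, mul_pow, Real.sq_sqrt zero_le_two]; ring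

end SquareRoot

theorem stmt_4_general (k ε : ℝ) (hk : 0 < k) (hεk : |ε| ≤ k ^ 2)
    (z : ℂ) (hz : z ^ 2 = (k ^ 2 : ℂ) + Complex.I * (ε : ℂ)) (him : 0 < z.im)
    (η : ℂ) (hη : 0 ≤ ((starRingEnd ℂ) z * η).re)
    (a b c : ℝ) (ha : 0 ≤ a) (hb : 0 ≤ b) (hc : 0 ≤ c) :
    |ε| / (2 * Real.sqrt 2 * k ^ 2) * (a + k ^ 2 * b) ≤
      ((-(starRingEnd ℂ) z / ((‖z‖ : ℝ) : ℂ)) *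
        ((a : ℂ) - z ^ 2 * (b : ℂ) - Complex.I * η * (c : ℂ))).im ∧
    ((-(starRingEnd ℂ) z / ((‖z‖ : ℝ) : ℂ)) *
        ((a : ℂ) - z ^ 2 * (b : ℂ) - Complex.I * η * (c : ℂ))).im ≤
      ‖(a : ℂ) - z ^ 2 * (b : ℂ) - Complex.I * η * (c : ℂ)‖ := by
  refine ⟨?_, im_neg_conj_div_norm_mul_le_norm z _⟩
  have hk_le_norm : k ^ 2 ≤ ‖z‖ ^ 2 := by
    rw [sq_norm_of_sq_eq hz]; nlinarith
  rw [im_neg_conj_div_norm_mul]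
  calc |ε| / (2 * √2 * k ^ 2) * (a + k ^ 2 * b) ≤ z.im / ‖z‖ * (a + k ^ 2 * b) :=
        mul_le_mul_of_nonneg_right (abs_div_le_im_div_norm_of_sq_eq hk hεk hz him) (by positivity)
    _ = (z.im * a + k ^ 2 * z.im * b) / ‖z‖ := by ring
    _ ≤ (z.im * a + ‖z‖ ^ 2 * z.im * b + c * (conj z * η).re) / ‖z‖ := by
        refine div_le_div_of_nonneg_right ?_ (norm_nonneg z)
        nlinarith [mul_nonneg hc hη, mul_le_mul_of_nonneg_right hk_le_norm (mul_nonneg him.le hb)]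

/-- The paper's coercivity Lemma 2.4 in algebraic form with an explicit constant:
with `z² = k² + iε`, `Im z > 0`, `Re(conj(z)η) ≥ 0`, `Θ = -conj(z)/|z|`, and
`A = a - z²b - iηc` for `a,b,c ≥ 0`, one has
`|A| ≥ Im(ΘA) ≥ (|ε|/(2√2 k²))(a + k²b)`. -/
theorem stmt_4 (k ε : ℝ) (hk : 0 < k) (hε0 : 0 < |ε|) (hεk : |ε| ≤ k ^ 2)
    (z : ℂ) (hz : z ^ 2 = (k ^ 2 : ℂ) + Complex.I * (ε : ℂ)) (him : 0 < z.im)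
    (η : ℂ) (hη : 0 ≤ ((starRingEnd ℂ) z * η).re)
    (a b c : ℝ) (ha : 0 ≤ a) (hb : 0 ≤ b) (hc : 0 ≤ c) :
    |ε| / (2 * Real.sqrt 2 * k ^ 2) * (a + k ^ 2 * b) ≤
      ((-(starRingEnd ℂ) z / ((‖z‖ : ℝ) : ℂ)) *
        ((a : ℂ) - z ^ 2 * (b : ℂ) - Complex.I * η * (c : ℂ))).im ∧
    ((-(starRingEnd ℂ) z / ((‖z‖ : ℝ) : ℂ)) *
        ((a : ℂ) - z ^ 2 * (b : ℂ) - Complex.I * η * (c : ℂ))).im ≤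
      ‖(a : ℂ) - z ^ 2 * (b : ℂ) - Complex.I * η * (c : ℂ)‖ :=
  stmt_4_general k ε hk hεk z hz him η hη a b c ha hb hc
end

section
/- Let V be a complex inner product space with norm ‖·‖, and let a : V × V → ℂ be a sesquilinear form (linear in its first argument, conjugate-linear in its second). Assume there are constants C_c > 0, γ > 0 and Θ ∈ ℂ with |Θ| = 1 such that |a(u,w)| ≤ C_c·‖u‖·‖w‖ for all u, w ∈ V, and Im(Θ·a(v,v)) ≥ γ·‖v‖² for all v ∈ V. Let V₀, …, V_N be subspaces of V and let Q₀, …, Q_N : V → V be maps such that for each ℓ and each v ∈ V, Q_ℓ v ∈ V_ℓ and a(Q_ℓ v, w) = a(v, w) for all w ∈ V_ℓ. Assume there is C_Λ ≥ 1 such that ‖∑_{ℓ=0}^N w_ℓ‖² ≤ C_Λ·∑_{ℓ=0}^N ‖w_ℓ‖² for every choice of w_ℓ ∈ V_ℓ. Then for every v ∈ V, ‖∑_{ℓ=0}^N Q_ℓ v‖ ≤ (C_Λ·C_c/γ)·‖v‖. -/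
/-!
Write `u = ∑ Q_ℓ v`. Testing coercivity with `Q_ℓ v` and using `a(Q_ℓ v, Q_ℓ v) = a(v, Q_ℓ v)`
gives `γ ∑ ‖Q_ℓ v‖² ≤ Im(Θ a(v, u)) ≤ C_c ‖v‖ ‖u‖`, while the stable decomposition bound gives
`‖u‖² ≤ C_Λ ∑ ‖Q_ℓ v‖²`. Together `γ ‖u‖² ≤ C_Λ C_c ‖v‖ ‖u‖`, and dividing by `γ ‖u‖` concludes.
-/

open Finset

lemma le_of_sq_le_mul {x c : ℝ} (hc : 0 ≤ c) (h : x ^ 2 ≤ c * x) : x ≤ c := by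
  nlinarith

lemma im_mul_le_norm_of_norm_eq_one {Θ : ℂ} (hΘ : ‖Θ‖ = 1) (z : ℂ) : (Θ * z).im ≤ ‖z‖ :=
  calc (Θ * z).im ≤ ‖Θ * z‖ := Complex.im_le_norm _
    _ = ‖z‖ := by rw [norm_mul, hΘ, one_mul]

lemma coercive_sum_sq_norm_le_im {V ι : Type*} [AddCommGroup V] [Norm V]
    (a : V → V → ℂ) (ha_add_right : ∀ u w₁ w₂, a u (w₁ + w₂) = a u w₁ + a u w₂)
    (γ : ℝ) (Θ : ℂ) (hcoer : ∀ v : V, γ * ‖v‖ ^ 2 ≤ (Θ * a v v).im)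
    (s : Finset ι) (Q : ι → V) (v : V) (hQ : ∀ i ∈ s, a (Q i) (Q i) = a v (Q i)) :
    γ * ∑ i ∈ s, ‖Q i‖ ^ 2 ≤ (Θ * a v (∑ i ∈ s, Q i)).im := by
  have h_sum_right : a v (∑ i ∈ s, Q i) = ∑ i ∈ s, a v (Q i) :=
    map_sum (AddMonoidHom.mk' (a v) (ha_add_right v)) Q s
  rw [h_sum_right, mul_sum, mul_sum, Complex.im_sum]
  refine sum_le_sum fun i hi => ?_
  simpa only [hQ i hi] using hcoer (Q i)

theorem stmt_6_general {V : Type*} [NormedAddCommGroup V] [InnerProductSpace ℂ V]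
    (a : V → V → ℂ)
    (ha_add_right : ∀ u w₁ w₂, a u (w₁ + w₂) = a u w₁ + a u w₂)
    (Cc γ : ℝ) (hCc : 0 < Cc) (hγ : 0 < γ)
    (Θ : ℂ) (hΘ : ‖Θ‖ = 1)
    (hcont : ∀ u w, ‖a u w‖ ≤ Cc * ‖u‖ * ‖w‖)
    (hcoer : ∀ v : V, γ * ‖v‖ ^ 2 ≤ (Θ * a v v).im)
    (N : ℕ) (Vs : ℕ → Submodule ℂ V) (Q : ℕ → V → V)
    (hQmem : ∀ ℓ ≤ N, ∀ v : V, Q ℓ v ∈ Vs ℓ)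
    (hQproj : ∀ ℓ ≤ N, ∀ v : V, ∀ w ∈ Vs ℓ, a (Q ℓ v) w = a v w)
    (CΛ : ℝ) (hCΛ : 1 ≤ CΛ)
    (hsum : ∀ w : ℕ → V, (∀ ℓ ≤ N, w ℓ ∈ Vs ℓ) →
      ‖∑ ℓ ∈ Finset.range (N + 1), w ℓ‖ ^ 2 ≤
        CΛ * ∑ ℓ ∈ Finset.range (N + 1), ‖w ℓ‖ ^ 2)
    (v : V) :
    ‖∑ ℓ ∈ Finset.range (N + 1), Q ℓ v‖ ≤ (CΛ * Cc / γ) * ‖v‖ := by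
  set u := ∑ ℓ ∈ range (N + 1), Q ℓ v
  set S := ∑ ℓ ∈ range (N + 1), ‖Q ℓ v‖ ^ 2
  have h_stable : ‖u‖ ^ 2 ≤ CΛ * S := hsum (Q · v) fun ℓ hℓ => hQmem ℓ hℓ v
  have h_coercive : γ * S ≤ Cc * ‖v‖ * ‖u‖ := by
    refine (coercive_sum_sq_norm_le_im a ha_add_right γ Θ hcoer _ (Q · v) v
      fun ℓ hℓ => ?_).trans ((im_mul_le_norm_of_norm_eq_one hΘ _).trans (hcont v u))
    have hℓN := mem_range_succ_iff.mp hℓ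
    exact hQproj ℓ hℓN v _ (hQmem ℓ hℓN v)
  refine le_of_sq_le_mul (by positivity) ?_
  calc ‖u‖ ^ 2 ≤ CΛ * S := h_stable
    _ = CΛ / γ * (γ * S) := by field_simp
    _ ≤ CΛ / γ * (Cc * ‖v‖ * ‖u‖) := by gcongr
    _ = CΛ * Cc / γ * ‖v‖ * ‖u‖ := by ring

/-- Abstract form of the paper's Theorem 4.3 (upper bound on the additive Schwarz
operator `Q = ∑ Q_ℓ`): for a continuous and coercive sesquilinear form `a`
(linear in the first argument, conjugate-linear in the second) and `a`-projections
`Q_ℓ` onto subspaces `V_ℓ` satisfying a finite-overlap type summation bound,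
`‖∑_{ℓ=0}^N Q_ℓ v‖ ≤ (C_Λ C_c / γ) ‖v‖`. -/
theorem stmt_6 {V : Type*} [NormedAddCommGroup V] [InnerProductSpace ℂ V]
    (a : V → V → ℂ)
    (ha_add_left : ∀ u₁ u₂ w, a (u₁ + u₂) w = a u₁ w + a u₂ w)
    (ha_smul_left : ∀ (c : ℂ) u w, a (c • u) w = c * a u w)
    (ha_add_right : ∀ u w₁ w₂, a u (w₁ + w₂) = a u w₁ + a u w₂)
    (ha_smul_right : ∀ (c : ℂ) u w, a u (c • w) = (starRingEnd ℂ) c * a u w)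
    (Cc γ : ℝ) (hCc : 0 < Cc) (hγ : 0 < γ)
    (Θ : ℂ) (hΘ : ‖Θ‖ = 1)
    (hcont : ∀ u w, ‖a u w‖ ≤ Cc * ‖u‖ * ‖w‖)
    (hcoer : ∀ v : V, γ * ‖v‖ ^ 2 ≤ (Θ * a v v).im)
    (N : ℕ) (Vs : ℕ → Submodule ℂ V) (Q : ℕ → V → V)
    (hQmem : ∀ ℓ ≤ N, ∀ v : V, Q ℓ v ∈ Vs ℓ)
    (hQproj : ∀ ℓ ≤ N, ∀ v : V, ∀ w ∈ Vs ℓ, a (Q ℓ v) w = a v w)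
    (CΛ : ℝ) (hCΛ : 1 ≤ CΛ)
    (hsum : ∀ w : ℕ → V, (∀ ℓ ≤ N, w ℓ ∈ Vs ℓ) →
      ‖∑ ℓ ∈ Finset.range (N + 1), w ℓ‖ ^ 2 ≤
        CΛ * ∑ ℓ ∈ Finset.range (N + 1), ‖w ℓ‖ ^ 2)
    (v : V) :
    ‖∑ ℓ ∈ Finset.range (N + 1), Q ℓ v‖ ≤ (CΛ * Cc / γ) * ‖v‖ :=
  stmt_6_general a ha_add_right Cc γ hCc hγ Θ hΘ hcont hcoer N Vs Q hQmem hQproj CΛ hCΛ hsum v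
end

section
/- Let V be a complex inner product space and C : V → V a linear map. Suppose there are constants d > 0 and M > 0 such that |⟪x, Cx⟫| ≥ d·‖x‖² and ‖Cx‖ ≤ M·‖x‖ for all x ∈ V. Then d ≤ M whenever V ≠ {0}, and for every r ∈ V there exists α ∈ ℂ with ‖r − α·(Cr)‖² ≤ (1 − d²/M²)·‖r‖². -/
/-!
Bounding `‖⟪x, C x⟫‖ ≤ ‖x‖ ‖C x‖` from above shows `d ‖x‖ ≤ ‖C x‖ ≤ M ‖x‖`, whence `d ≤ M`.
For the residual estimate, take `α C r` to be the orthogonal projection of `r` onto the line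
spanned by `C r`; Pythagoras gives `‖r - α C r‖² = ‖r‖² - ‖⟪C r, r⟫‖² / ‖C r‖²`, and the
subtracted term is at least `(d ‖r‖²)² / (M ‖r‖)² = (d² / M²) ‖r‖²`.
-/

section
variable {𝕜 E : Type*} [RCLike 𝕜] [NormedAddCommGroup E] [InnerProductSpace 𝕜 E]

local notation "⟪" x ", " y "⟫" => inner 𝕜 x y

theorem norm_sub_inner_div_smul_sq (u v : E) :
    ‖u - (⟪v, u⟫ / (‖v‖ ^ 2 : 𝕜)) • v‖ ^ 2 = ‖u‖ ^ 2 - ‖⟪v, u⟫‖ ^ 2 / ‖v‖ ^ 2 := by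
  rcases eq_or_ne v 0 with rfl | hv
  · simp
  have hv2 : ‖v‖ ^ 2 ≠ 0 := by positivity
  have hinner : ⟪u, (⟪v, u⟫ / (‖v‖ ^ 2 : 𝕜)) • v⟫ = ((‖⟪v, u⟫‖ ^ 2 / ‖v‖ ^ 2 : ℝ) : 𝕜) := by
    rw [inner_smul_right, ← inner_conj_symm u v, div_mul_eq_mul_div, RCLike.mul_conj]
    push_cast
    rfl
  rw [@norm_sub_sq 𝕜, hinner, RCLike.ofReal_re, norm_smul, norm_div, norm_pow, RCLike.norm_ofReal,
    abs_norm]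
  field_simp
  ring

theorem mul_norm_le_norm_of_mul_sq_le_norm_inner {d : ℝ} {u v : E}
    (h : d * ‖u‖ ^ 2 ≤ ‖⟪u, v⟫‖) : d * ‖u‖ ≤ ‖v‖ := by
  rcases eq_or_ne u 0 with rfl | hu
  · simp
  refine le_of_mul_le_mul_right ?_ (norm_pos_iff.mpr hu)
  calc d * ‖u‖ * ‖u‖ = d * ‖u‖ ^ 2 := by ring
    _ ≤ ‖⟪u, v⟫‖ := h
    _ ≤ ‖u‖ * ‖v‖ := norm_inner_le_norm u v
    _ = ‖v‖ * ‖u‖ := mul_comm _ _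

theorem exists_norm_sub_smul_sq_le {d M : ℝ} (hd : 0 < d) {u v : E}
    (hinner : d * ‖u‖ ^ 2 ≤ ‖⟪u, v⟫‖) (hv : ‖v‖ ≤ M * ‖u‖) :
    ∃ α : 𝕜, ‖u - α • v‖ ^ 2 ≤ (1 - d ^ 2 / M ^ 2) * ‖u‖ ^ 2 := by
  refine ⟨⟪v, u⟫ / (‖v‖ ^ 2 : 𝕜), ?_⟩
  rw [norm_sub_inner_div_smul_sq]
  rcases eq_or_ne u 0 with rfl | hu
  · simp
  have hu' : 0 < ‖u‖ := norm_pos_iff.mpr hu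
  have hv' : 0 < ‖v‖ :=
    (mul_pos hd hu').trans_le (mul_norm_le_norm_of_mul_sq_le_norm_inner hinner)
  have hnum : (d * ‖u‖ ^ 2) ^ 2 ≤ ‖⟪v, u⟫‖ ^ 2 := by
    rw [← norm_inner_symm u v]
    exact pow_le_pow_left₀ (by positivity) hinner 2
  have hden : ‖v‖ ^ 2 ≤ (M * ‖u‖) ^ 2 := pow_le_pow_left₀ (norm_nonneg v) hv 2
  have hfrac : d ^ 2 / M ^ 2 * ‖u‖ ^ 2 ≤ ‖⟪v, u⟫‖ ^ 2 / ‖v‖ ^ 2 :=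
    calc d ^ 2 / M ^ 2 * ‖u‖ ^ 2 = (d * ‖u‖ ^ 2) ^ 2 / (M * ‖u‖) ^ 2 := by
          field_simp
      _ ≤ ‖⟪v, u⟫‖ ^ 2 / ‖v‖ ^ 2 := div_le_div₀ (by positivity) hnum (by positivity) hden
  linarith

end

theorem stmt_11_general {V : Type*} [NormedAddCommGroup V] [InnerProductSpace ℂ V]
    (C : V →ₗ[ℂ] V) (d M : ℝ) (hd : 0 < d)
    (hfov : ∀ x : V, d * ‖x‖ ^ 2 ≤ ‖(inner ℂ x (C x) : ℂ)‖)
    (hnorm : ∀ x : V, ‖C x‖ ≤ M * ‖x‖) :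
    ((∃ x : V, x ≠ 0) → d ≤ M) ∧
    ∀ r : V, ∃ α : ℂ, ‖r - α • C r‖ ^ 2 ≤ (1 - d ^ 2 / M ^ 2) * ‖r‖ ^ 2 := by
  refine ⟨fun ⟨x, hx⟩ => ?_, fun r => exists_norm_sub_smul_sq_le hd (hfov r) (hnorm r)⟩
  refine le_of_mul_le_mul_right ?_ (norm_pos_iff.mpr hx)
  exact (mul_norm_le_norm_of_mul_sq_le_norm_inner (hfov x)).trans (hnorm x)

/-- The one-step Elman estimate underlying the paper's Theorem 5.1: if the field of
values of the linear map `C` is at distance at least `d > 0` from the origin and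
`‖C‖ ≤ M`, then `d ≤ M` (when `V ≠ {0}`) and for every `r` there is `α ∈ ℂ` with
`‖r - α C r‖² ≤ (1 - d²/M²) ‖r‖²`. -/
theorem stmt_11 {V : Type*} [NormedAddCommGroup V] [InnerProductSpace ℂ V]
    (C : V →ₗ[ℂ] V) (d M : ℝ) (hd : 0 < d) (hM : 0 < M)
    (hfov : ∀ x : V, d * ‖x‖ ^ 2 ≤ ‖(inner ℂ x (C x) : ℂ)‖)
    (hnorm : ∀ x : V, ‖C x‖ ≤ M * ‖x‖) :
    ((∃ x : V, x ≠ 0) → d ≤ M) ∧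
    ∀ r : V, ∃ α : ℂ, ‖r - α • C r‖ ^ 2 ≤ (1 - d ^ 2 / M ^ 2) * ‖r‖ ^ 2 :=
  stmt_11_general C d M hd hfov hnorm
end
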